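/- Nonlinear error representation with Galerkin orthogonality: Under the hypotheses of the nonlinear error representation (u solves F(u; v) = 0 for all v ∈ V̂, and z ∈ V̂ solves the averaged dual problem tested against a subspace V₀ containing u − u_h), assume additionally that u_h satisfies the discrete problem F(u_h; v) = 0 for all v in a linear subspace V̂_h of V̂. Then for every y ∈ V̂_h (e.g., y an interpolant π_h z of the dual solution), M(u) − M(u_h) = −F(u_h; z − y). -/

import Mathlib

open scoped intervalIntegral

/-! Along the segment from `u_h` to `u`, the fundamental theorem of calculus turns the averaged
derivatives of `x ↦ F(x; z)` and of `M` applied to `u - u_h` into the increments `F(u; z) - F(u_h; z)`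
and `M u - M u_h`. Testing the dual problem with `w = u - u_h` and using `F(u; z) = 0` gives
`M u - M u_h = -F(u_h; z)`; Galerkin orthogonality then lets `y ∈ Vhat_h` be subtracted from `z`. -/

theorem integral_fderiv_segment_apply_sub {V E : Type*} [NormedAddCommGroup V]
    [NormedSpace ℝ V] [NormedAddCommGroup E] [NormedSpace ℝ E] [CompleteSpace E]
    {f : V → E} (hf : ContDiff ℝ 1 f) (u u_h : V) :
    (∫ s in (0 : ℝ)..1, fderiv ℝ f (s • u + (1 - s) • u_h) (u - u_h)) = f u - f u_h := by
  have hsegment : ∀ s : ℝ,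
      HasDerivAt (fun t : ℝ => t • u + (1 - t) • u_h) (u - u_h) s := by
    intro s
    have h := ((hasDerivAt_id' s).smul_const (u - u_h)).const_add u_h
    rw [one_smul] at h
    convert h using 1
    funext t
    module
  have hderiv : ∀ s ∈ Set.uIcc (0 : ℝ) 1, HasDerivAt (fun t : ℝ => f (t • u + (1 - t) • u_h))
      (fderiv ℝ f (s • u + (1 - s) • u_h) (u - u_h)) s := fun s _ =>
    ((hf.differentiable one_ne_zero) _).hasFDerivAt.comp_hasDerivAt s (hsegment s)
  have hcont : Continuous fun s : ℝ => fderiv ℝ f (s • u + (1 - s) • u_h) (u - u_h) :=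
    ((hf.continuous_fderiv one_ne_zero).comp (by fun_prop)).clm_apply continuous_const
  simpa using
    intervalIntegral.integral_eq_sub_of_hasDerivAt hderiv (hcont.intervalIntegrable 0 1)

theorem nonlinear_error_representation {V Vhat : Type*} [NormedAddCommGroup V]
    [NormedSpace ℝ V] [AddCommGroup Vhat] [Module ℝ Vhat]
    {F : V → Vhat →ₗ[ℝ] ℝ} {M : V → ℝ} {u u_h : V} {z : Vhat}
    (hF : ContDiff ℝ 1 (fun w => F w z))
    (hM : ContDiff ℝ 1 M) (hprimal : F u z = 0)
    (hdual : (∫ s in (0 : ℝ)..1, fderiv ℝ (fun x => F x z) (s • u + (1 - s) • u_h) (u - u_h))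
        = ∫ s in (0 : ℝ)..1, fderiv ℝ M (s • u + (1 - s) • u_h) (u - u_h)) :
    M u - M u_h = -F u_h z := by
  rw [integral_fderiv_segment_apply_sub hF, integral_fderiv_segment_apply_sub hM,
    hprimal] at hdual
  rw [← hdual, zero_sub]

/-- Nonlinear error representation with Galerkin orthogonality: under the
hypotheses of the nonlinear error representation (`u` solves `F(u; v) = 0` for
all `v ∈ Vhat`, and `z` solves the averaged dual problem tested against a
subspace `V₀` of `V` containing `u - u_h`), if moreover `u_h` satisfies the
discrete problem `F(u_h; v) = 0` for all `v` in a subspace `Vhat_h` of `Vhat`,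
then for every `y ∈ Vhat_h` (e.g. an interpolant `π_h z` of the dual solution),
`M(u) - M(u_h) = -F(u_h; z - y)`. -/
theorem nonlinear_error_representation_galerkin
    (V Vhat : Type*) [NormedAddCommGroup V] [NormedSpace ℝ V]
    [AddCommGroup Vhat] [Module ℝ Vhat]
    (F : V → Vhat →ₗ[ℝ] ℝ) (M : V → ℝ)
    (hF : ∀ v : Vhat, ContDiff ℝ 1 (fun w => F w v))
    (hM : ContDiff ℝ 1 M)
    (u u_h : V) (z : Vhat) (V₀ : Submodule ℝ V) (Vhat_h : Submodule ℝ Vhat)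
    (hprimal : ∀ v : Vhat, F u v = 0)
    (hdiscrete : ∀ v ∈ Vhat_h, F u_h v = 0)
    (hmem : u - u_h ∈ V₀)
    (hdual : ∀ w ∈ V₀,
      (∫ s in (0 : ℝ)..1, fderiv ℝ (fun x => F x z) (s • u + (1 - s) • u_h) w)
        = ∫ s in (0 : ℝ)..1, fderiv ℝ M (s • u + (1 - s) • u_h) w) :
    ∀ y ∈ Vhat_h, M u - M u_h = -F u_h (z - y) := by
  intro y hy
  rw [nonlinear_error_representation (hF z) hM (hprimal z) (hdual _ hmem), map_sub,
    hdiscrete y hy, sub_zero]
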